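/- arXiv:1207.2987 — 6 statements merged into one kernel-verified Lean document; each statement's English description precedes it below -/
import Mathlib

section
/- Let W be a word of length x over a finite alphabet, and let d be a positive integer. Then either the first ⌊x/d⌋ suffixes of W (i.e., the suffixes starting at positions 1 through ⌊x/d⌋) are pairwise non-prefix-comparable (no one is a prefix of another), or W contains a subword of the form u^d for some nonempty word u. -/
lemma aux_period {α : Type*} (p : ℕ) : ∀ (d : ℕ) (l : List α),
    l.drop p <+: l → d * p ≤ l.length →
    (List.replicate d (l.take p)).flatten <+: l := by
  intro d
  induction d with
  | zero => intro l _ _; simp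
  | succ k ih =>
    intro l h hlen
    have hp : p ≤ l.length := by nlinarith
    obtain ⟨t, ht⟩ := h
    rcases Nat.eq_zero_or_pos k with hk | hk
    · subst hk
      simpa using l.take_prefix p
    · have hdl : p ≤ (l.drop p).length := by
        have h2p : 2 * p ≤ (k+1) * p := Nat.mul_le_mul_right p (by omega)
        simp only [List.length_drop]
        omega
      have h2 : (l.drop p).drop p <+: l.drop p := by
        refine ⟨t, ?_⟩
        conv_rhs => rw [← ht]
        rw [List.drop_append_of_le_length hdl]
      have hlen2 : k * p ≤ (l.drop p).length := by
        simp [List.length_drop]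
        have : (k+1) * p = k * p + p := by ring
        omega
      have ihres := ih (l.drop p) h2 hlen2
      have htake : (l.drop p).take p = l.take p := by
        conv_rhs => rw [← ht]
        rw [List.take_append_of_le_length hdl]
      rw [htake] at ihres
      obtain ⟨s, hs⟩ := ihres
      refine ⟨s, ?_⟩
      rw [List.replicate_succ, List.flatten_cons, List.append_assoc, hs,
        List.take_append_drop]

/-- Lemma (Lm 0.1): either the first ⌊x/d⌋ suffixes of `W` are pairwise
non-prefix-comparable, or `W` contains a `d`-th power of a nonempty word. -/
theorem stmt_0 {α : Type*} [Fintype α] (W : List α) (d : ℕ) (hd : 0 < d) :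
    (∀ i j : ℕ, i < W.length / d → j < W.length / d → i ≠ j →
      ¬(W.drop i <+: W.drop j ∨ W.drop j <+: W.drop i)) ∨
    (∃ u : List α, u ≠ [] ∧ (List.replicate d u).flatten <:+: W) := by
  by_contra hcon
  push_neg at hcon
  obtain ⟨⟨i, j, hi, hj, hij, hor⟩, hno⟩ := hcon
  -- get a < b with W.drop b <+: W.drop a
  have key : ∀ a b : ℕ, a < b → b < W.length / d → W.drop b <+: W.drop a → False := by
    intro a b hab hb hpre
    set p := b - a with hp
    have hppos : 0 < p := by omega
    have hdrop : (W.drop a).drop p = W.drop b := by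
      rw [List.drop_drop]; congr 1; omega
    have h1 : d * (b + 1) ≤ W.length := by
      calc d * (b + 1) ≤ d * (W.length / d) := Nat.mul_le_mul_left d hb
        _ ≤ W.length := Nat.mul_div_le W.length d
    rw [Nat.mul_succ] at h1
    have h2 : a ≤ d * a := Nat.le_mul_of_pos_left a hd
    have hsub : d * p = d * b - d * a := by rw [hp, Nat.mul_sub]
    have hlen : d * p ≤ (W.drop a).length := by
      rw [List.length_drop]
      have h3 : d * a < d * b := (Nat.mul_lt_mul_left hd).mpr hab
      omega
    have hperiod : (W.drop a).drop p <+: W.drop a := by rw [hdrop]; exact hpre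
    have hpow := aux_period p d (W.drop a) hperiod hlen
    refine hno ((W.drop a).take p) ?_ ?_
    · intro hnil
      have hple : p ≤ d * p := Nat.le_mul_of_pos_left p hd
      rw [List.length_drop] at hlen
      rcases List.take_eq_nil_iff.mp hnil with h | h
      · omega
      · have := congrArg List.length h
        simp only [List.length_drop, List.length_nil] at this
        omega
    · exact hpow.isInfix.trans (W.drop_suffix a).isInfix
  rcases hor with hpre | hpre
  · rcases Nat.lt_or_ge i j with h | h
    · -- i < j, drop i <+: drop j: length contradiction
      have hl := hpre.length_le
      simp only [List.length_drop] at hl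
      have : j < W.length := lt_of_lt_of_le hj (Nat.div_le_self _ _)
      omega
    · exact key j i (by omega) hi hpre
  · rcases Nat.lt_or_ge i j with h | h
    · exact key i j h hj hpre
    · have hl := hpre.length_le
      simp only [List.length_drop] at hl
      have : i < W.length := lt_of_lt_of_le hi (Nat.div_le_self _ _)
      omega
end

section
/- Let W be a word over a linearly ordered finite alphabet, and let n, d be positive integers. If W contains n pairwise disjoint occurrences of the same subword u, where u has length n·d, then either W is n-divisible or W contains a subword of the form v^d for some nonempty word v. -/
/-
If `u` has no period `b - a` with `a < b < n`, then its suffixes starting at `0, …, n - 1`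
are pairwise incomparable for the prefix order. Cutting the `i`-th occurrence of `u` at the
start of the `i`-th largest of these suffixes then yields `n` pieces, each beginning with
its designated suffix; consecutive designated suffixes differ at a letter, so the pieces
decrease. Otherwise `u.drop a` has period `b - a < n`, and since `|u| = n d` it is long
enough to begin with a `d`-th power.
-/

/-- `W` is `n`-divisible: `W = v ++ u₁ ++ ⋯ ++ uₙ` with the nonempty words
`u₁ ≻ u₂ ≻ ⋯ ≻ uₙ` strictly lexicographically decreasing. -/
def IsNDivisible {α : Type*} [LinearOrder α] (n : ℕ) (W : List α) : Prop :=
  ∃ (v : List α) (us : List (List α)), us.length = n ∧ (∀ u ∈ us, u ≠ []) ∧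
    W = v ++ us.flatten ∧ us.Chain' (fun a b => b < a)

open List

section

variable {α : Type*}

theorem flatten_replicate_take_prefix_of_drop_prefix {z : List α} {t d : ℕ}
    (hp : z.drop t <+: z) (hlen : d * t ≤ z.length) :
    (replicate d (z.take t)).flatten <+: z := by
  set w := z.take t
  have hperiodic : ∀ k, z <+: (replicate k w).flatten ++ z := by
    intro k
    induction k with
    | zero => simp
    | succ k ih =>
      calc z = w ++ z.drop t := (take_append_drop t z).symm
        _ <+: w ++ z := (prefix_append_right_inj w).2 hp
        _ <+: w ++ ((replicate k w).flatten ++ z) := (prefix_append_right_inj w).2 ih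
        _ = (replicate (k + 1) w).flatten ++ z := by simp [replicate_succ]
  refine prefix_of_prefix_length_le (prefix_append _ z) (hperiodic d) ?_
  calc (replicate d w).flatten.length = d * w.length := by simp
    _ ≤ d * t := Nat.mul_le_mul_left d (length_take_le t z)
    _ ≤ z.length := hlen

theorem exists_flatten_replicate_infix_of_drop_prefix {u : List α} {a b d : ℕ} (hd : 0 < d)
    (hab : a < b) (hlen : a + d * (b - a) ≤ u.length) (hp : u.drop b <+: u.drop a) :
    ∃ v : List α, v ≠ [] ∧ (replicate d v).flatten <:+: u := by
  have hperiod : (u.drop a).drop (b - a) <+: u.drop a := by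
    rwa [drop_drop, Nat.add_sub_cancel' hab.le]
  refine ⟨(u.drop a).take (b - a), ?_, ?_⟩
  · have : d ≤ d * (b - a) := Nat.le_mul_of_pos_right d (by omega)
    simp only [ne_eq, take_eq_nil_iff, drop_eq_nil_iff, not_or]
    omega
  · refine (flatten_replicate_take_prefix_of_drop_prefix hperiod ?_).isInfix.trans
      (drop_suffix a u).isInfix
    rw [length_drop]
    omega

theorem card_image_drop_range [DecidableEq α] {u : List α} {n : ℕ} (hn : n ≤ u.length) :
    ((Finset.range n).image fun k => u.drop k).card = n := by
  rw [Finset.card_image_of_injOn, Finset.card_range]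
  intro a ha b hb hab
  have := congrArg length hab
  simp only [Finset.coe_range, Set.mem_Iio, length_drop] at ha hb this
  omega

theorem isAntichain_prefix_image_drop_range [DecidableEq α] {u : List α} {n : ℕ}
    (hn : n ≤ u.length) (hper : ∀ a b, a < b → b < n → ¬ u.drop b <+: u.drop a) :
    IsAntichain (· <+: ·)
      (((Finset.range n).image fun k => u.drop k : Finset _) : Set (List α)) := by
  simp only [Finset.coe_image, Finset.coe_range]
  rintro _ ⟨a, ha, rfl⟩ _ ⟨b, hb, rfl⟩ hne hpre
  rw [Set.mem_Iio] at ha hb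
  rcases lt_trichotomy a b with hab | rfl | hab
  · have := hpre.length_le
    rw [length_drop, length_drop] at this
    omega
  · exact hne rfl
  · exact hper b a hab ha hpre

end

section

variable {α : Type*} [LinearOrder α]

/-- `x` is lexicographically smaller than `y` at a letter, so that the comparison survives any
extension of `x` and `y`. -/
def BranchLt (x y : List α) : Prop :=
  ∃ (c : List α) (a b : α) (s t : List α), a < b ∧ x = c ++ a :: s ∧ y = c ++ b :: t

theorem BranchLt.lt_of_prefix {x y X Y : List α} (h : BranchLt x y) (hx : x <+: X)
    (hy : y <+: Y) : X < Y := by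
  obtain ⟨c, a, b, s, t, hab, rfl, rfl⟩ := h
  obtain ⟨s', rfl⟩ := hx
  obtain ⟨t', rfl⟩ := hy
  simp only [append_assoc, cons_append]
  induction c with
  | nil => exact cons_lt_cons_iff.2 (.inl hab)
  | cons e c ih => exact cons_lt_cons_iff.2 (.inr ⟨rfl, ih⟩)

theorem branchLt_of_lt_of_not_prefix : ∀ {x y : List α}, x < y → ¬ x <+: y → BranchLt x y
  | [], _, _, hpre => absurd (nil_prefix) hpre
  | _ :: _, [], hlt, _ => absurd hlt (not_lt_nil _)
  | a :: x, b :: y, hlt, hpre => by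
    rcases cons_lt_cons_iff.1 hlt with hab | ⟨rfl, hxy⟩
    · exact ⟨[], a, b, x, y, hab, rfl, rfl⟩
    · obtain ⟨c, a', b', s, t, hab', rfl, rfl⟩ :=
        branchLt_of_lt_of_not_prefix hxy (fun h => hpre ((prefix_cons_inj a).2 h))
      exact ⟨a :: c, a', b', s, t, hab', rfl, rfl⟩

variable (W : List α)

-- An entry `(c, x)` of `L` is a cut position `c` in `W` at which `W` reads the word `x`.
theorem exists_flatten_eq_drop_of_chain :
    ∀ (L : List (ℕ × List α)) (c : ℕ) (x : List α),
      ((c, x) :: L).IsChain (fun e f => e.1 + e.2.length ≤ f.1 ∧ BranchLt f.2 e.2) →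
      (∀ e ∈ (c, x) :: L, e.2 ≠ [] ∧ e.2 <+: W.drop e.1) →
      ∃ (y : List α) (us : List (List α)),
        us.length = L.length ∧ (∀ w ∈ y :: us, w ≠ []) ∧
        (y :: us).IsChain (fun a b => b < a) ∧ W.drop c = (y :: us).flatten ∧ x <+: y
  | [], c, x, _, hmem => by
    obtain ⟨hx, hxW⟩ := hmem _ mem_cons_self
    refine ⟨W.drop c, [], rfl, ?_, isChain_singleton _, by simp, hxW⟩
    simpa using fun h : W.drop c = [] => hx (prefix_nil.1 (h ▸ hxW))
  | (c', x') :: L, c, x, hchain, hmem => by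
    obtain ⟨⟨hcut, hbranch⟩, hchain'⟩ := isChain_cons_cons.1 hchain
    dsimp only at hcut
    obtain ⟨y', us, hlen, hne, hdec, hflat, hx'⟩ :=
      exists_flatten_eq_drop_of_chain L c' x' hchain' (fun e he => hmem e (mem_cons_of_mem _ he))
    obtain ⟨hx, hxW⟩ := hmem _ mem_cons_self
    set y := (W.drop c).take (c' - c)
    have hxy : x <+: y := prefix_take_iff.2 ⟨hxW, by omega⟩
    have hsplit : W.drop c = y ++ W.drop c' := by
      rw [← take_append_drop (c' - c) (W.drop c), drop_drop, Nat.add_sub_cancel' (by omega)]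
    refine ⟨y, y' :: us, by simp [hlen], ?_, ?_, by simp [hsplit, hflat], hxy⟩
    · rintro w (_ | ⟨_, hw⟩)
      exacts [fun h => hx (prefix_nil.1 (h ▸ hxy)), hne w hw]
    · exact isChain_cons_cons.2 ⟨hbranch.lt_of_prefix hx' hxy, hdec⟩

theorem isNDivisible_of_chain (L : List (ℕ × List α))
    (hchain : L.IsChain (fun e f => e.1 + e.2.length ≤ f.1 ∧ BranchLt f.2 e.2))
    (hmem : ∀ e ∈ L, e.2 ≠ [] ∧ e.2 <+: W.drop e.1) : IsNDivisible L.length W := by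
  rcases L with _ | ⟨⟨c, x⟩, L⟩
  · exact ⟨W, [], rfl, by simp, by simp, isChain_nil⟩
  · obtain ⟨y, us, hlen, hne, hdec, hflat, -⟩ :=
      exists_flatten_eq_drop_of_chain W L c x hchain hmem
    exact ⟨W.take c, y :: us, by simp [hlen], hne, by rw [← hflat, take_append_drop], hdec⟩

theorem isNDivisible_of_prefix_antichain {n : ℕ} {u : List α} (S : Finset (List α))
    (hcard : S.card = n) (hanti : IsAntichain (· <+: ·) (S : Set (List α)))
    (hsuf : ∀ x ∈ S, x <:+ u) (hne : [] ∉ S) (p : Fin n → ℕ)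
    (hocc : ∀ i, u <+: W.drop (p i))
    (hdisj : ∀ i j : Fin n, i < j → p i + u.length ≤ p j) : IsNDivisible n W := by
  set x : Fin n → List α := fun i => S.orderEmbOfFin hcard i.rev
  have hxS : ∀ i, x i ∈ S := fun i => S.orderEmbOfFin_mem hcard _
  have hxu : ∀ i, (x i).length ≤ u.length := fun i => (hsuf _ (hxS i)).length_le
  have hdec : StrictAnti x := fun i j hij =>
    (S.orderEmbOfFin hcard).strictMono (Fin.rev_lt_rev.2 hij)
  set L := List.ofFn fun i => (p i + (u.length - (x i).length), x i)
  have hmem : ∀ e ∈ L, e.2 ≠ [] ∧ e.2 <+: W.drop e.1 := by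
    simp only [L, mem_ofFn, forall_exists_index]
    rintro _ i rfl
    refine ⟨fun h => hne (h ▸ hxS i), ?_⟩
    have := (hocc i).drop (u.length - (x i).length)
    rwa [← suffix_iff_eq_drop.1 (hsuf _ (hxS i)), drop_drop] at this
  have hchain : L.IsChain (fun e f => e.1 + e.2.length ≤ f.1 ∧ BranchLt f.2 e.2) := by
    refine isChain_ofFn.2 fun i hi => ⟨?_, ?_⟩
    · have := hdisj ⟨i, by omega⟩ ⟨i + 1, hi⟩ (Fin.mk_lt_mk.2 (by omega))
      have := hxu ⟨i, by omega⟩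
      dsimp only
      omega
    · have hlt := hdec (Fin.mk_lt_mk.2 (Nat.lt_succ_self i) :
        (⟨i, by omega⟩ : Fin n) < ⟨i + 1, hi⟩)
      exact branchLt_of_lt_of_not_prefix hlt (hanti (hxS _) (hxS _) hlt.ne)
  simpa [L] using isNDivisible_of_chain W L hchain hmem

end

theorem stmt_2_general {α : Type*} [LinearOrder α] (n d : ℕ) (hd : 0 < d)
    (W : List α) (u : List α) (hu : u.length = n * d)
    (p : Fin n → ℕ)
    (hocc : ∀ i, (W.drop (p i)).take u.length = u ∧ p i + u.length ≤ W.length)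
    (hdisj : ∀ i j : Fin n, i < j → p i + u.length ≤ p j) :
    IsNDivisible n W ∨ ∃ v : List α, v ≠ [] ∧ (List.replicate d v).flatten <:+: W := by
  have hpre : ∀ i, u <+: W.drop (p i) := fun i => (hocc i).1 ▸ take_prefix _ _
  have hnu : n ≤ u.length := hu ▸ Nat.le_mul_of_pos_right n hd
  by_cases hper : ∃ a b, a < b ∧ b < n ∧ u.drop b <+: u.drop a
  · right
    obtain ⟨a, b, hab, hbn, hp⟩ := hper
    have hlen : a + d * (b - a) ≤ u.length := by
      have : d * (b - a) + d * a = d * b := by rw [← Nat.mul_add, Nat.sub_add_cancel hab.le]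
      have : d * b ≤ d * n := Nat.mul_le_mul_left d hbn.le
      have : a ≤ d * a := Nat.le_mul_of_pos_left a hd
      rw [hu, Nat.mul_comm n d]
      omega
    obtain ⟨v, hv, hvu⟩ := exists_flatten_replicate_infix_of_drop_prefix hd hab hlen hp
    exact ⟨v, hv, hvu.trans ((hpre ⟨a, by omega⟩).isInfix.trans (drop_suffix _ _).isInfix)⟩
  · left
    push Not at hper
    refine isNDivisible_of_prefix_antichain W _ (card_image_drop_range hnu)
      (isAntichain_prefix_image_drop_range hnu hper) ?_ ?_ p hpre hdisj
    · simp only [Finset.mem_image]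
      rintro _ ⟨k, -, rfl⟩
      exact drop_suffix k u
    · simp only [Finset.mem_image, Finset.mem_range, drop_eq_nil_iff, not_exists, not_and]
      omega

/-- Lemma: if `W` contains `n` pairwise disjoint occurrences of the same subword `u`
of length `n·d`, then `W` is `n`-divisible or contains a `d`-th power. -/
theorem stmt_2 {α : Type*} [Fintype α] [LinearOrder α] (n d : ℕ) (hn : 0 < n) (hd : 0 < d)
    (W : List α) (u : List α) (hu : u.length = n * d)
    (p : Fin n → ℕ) (hmono : StrictMono p)
    (hocc : ∀ i, (W.drop (p i)).take u.length = u ∧ p i + u.length ≤ W.length)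
    (hdisj : ∀ i j : Fin n, i < j → p i + u.length ≤ p j) :
    IsNDivisible n W ∨ ∃ v : List α, v ≠ [] ∧ (List.replicate d v).flatten <:+: W :=
  stmt_2_general n d hd W u hu p hocc hdisj
end

section
/- Let p ≥ 2 and k ≥ 2 be integers. Let S be a finite sequence of 0-1 vectors of length k−1, each containing exactly one entry equal to 1 and all other entries equal to 0. Suppose S satisfies: for every position s with 1 ≤ s ≤ k−1, whenever there exist p terms of S (not necessarily consecutive) whose '1' is at position s, there exists a term of S strictly between the first and the p-th of these terms whose '1' is at a position strictly less than s. Then the length of S is at most p^{k-1} − 1. -/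
namespace Stmt4Aux

open Finset

/-- Indices `i < m` whose value is `v` such that every later index `< m` has value `≥ v`. -/
def Dset {n : ℕ} (l : List (Fin n)) (v m : ℕ) : Finset (Fin l.length) :=
  Finset.univ.filter fun i => (i : ℕ) < m ∧ ((l.get i : ℕ) = v ∧
    ∀ j : Fin l.length, (i : ℕ) < (j : ℕ) → (j : ℕ) < m → v ≤ (l.get j : ℕ))

lemma mem_Dset {n : ℕ} {l : List (Fin n)} {v m : ℕ} {i : Fin l.length} :
    i ∈ Dset l v m ↔ (i : ℕ) < m ∧ (l.get i : ℕ) = v ∧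
      ∀ j : Fin l.length, (i : ℕ) < (j : ℕ) → (j : ℕ) < m → v ≤ (l.get j : ℕ) := by
  simp [Dset]

lemma geom (q N : ℕ) : q * ∑ i ∈ range N, (q + 1) ^ i + 1 = (q + 1) ^ N := by
  induction N with
  | zero => simp
  | succ N ih =>
    rw [Finset.sum_range_succ, Nat.mul_add, add_right_comm, ih, pow_succ]
    ring

lemma sumpow (p N : ℕ) (hp : 1 ≤ p) :
    ∑ i ∈ range N, (p - 1) * p ^ (N - 1 - i) = p ^ N - 1 := by
  obtain ⟨q, rfl⟩ : ∃ q, p = q + 1 := ⟨p - 1, by omega⟩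
  simp only [Nat.add_sub_cancel]
  rw [Finset.sum_range_reflect (fun i => q * (q + 1) ^ i) N, ← Finset.mul_sum]
  have := geom q N
  omega

lemma tail (p a n : ℕ) (hp : 1 ≤ p) (h : a < n) :
    ∑ v ∈ Ico (a + 1) n, (p - 1) * p ^ (n - 1 - v) = p ^ (n - 1 - a) - 1 := by
  have hN : n - (a + 1) = n - 1 - a := by omega
  rw [Finset.sum_Ico_eq_sum_range, hN]
  have h2 : ∀ i ∈ range (n - 1 - a), (p - 1) * p ^ (n - 1 - (a + 1 + i)) =
      (p - 1) * p ^ ((n - 1 - a) - 1 - i) := by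
    intro i _
    congr 2
    omega
  rw [Finset.sum_congr rfl h2, sumpow _ _ hp]

lemma card_Dset_le (p n : ℕ) (hp : 2 ≤ p) (l : List (Fin n))
    (hproc : ∀ v : Fin n, ∀ idx : Fin p → Fin l.length,
      StrictMono idx → (∀ a, l.get (idx a) = v) →
      ∃ j : Fin l.length, idx ⟨0, by omega⟩ < j ∧ j < idx ⟨p - 1, by omega⟩ ∧ l.get j < v)
    (v m : ℕ) : (Dset l v m).card ≤ p - 1 := by
  by_contra hc
  have hcard : p ≤ (Dset l v m).card := by omega
  have hmem : ∀ a : Fin p, Finset.orderEmbOfCardLe (Dset l v m) hcard a ∈ Dset l v m :=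
    fun a => Finset.orderEmbOfCardLe_mem (Dset l v m) hcard a
  obtain ⟨h0a, h0b, h0c⟩ := mem_Dset.1 (hmem ⟨0, by omega⟩)
  have hvn : v < n := by
    have := (l.get (Finset.orderEmbOfCardLe (Dset l v m) hcard ⟨0, by omega⟩)).isLt
    omega
  obtain ⟨j, hj1, hj2, hj3⟩ := hproc ⟨v, hvn⟩ (Finset.orderEmbOfCardLe (Dset l v m) hcard)
    (Finset.orderEmbOfCardLe (Dset l v m) hcard).strictMono
    (fun a => Fin.ext (mem_Dset.1 (hmem a)).2.1)
  have hlast : (Finset.orderEmbOfCardLe (Dset l v m) hcard ⟨p - 1, by omega⟩ : ℕ) < m :=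
    (mem_Dset.1 (hmem ⟨p - 1, by omega⟩)).1
  have hj1' : (Finset.orderEmbOfCardLe (Dset l v m) hcard ⟨0, by omega⟩ : ℕ) < (j : ℕ) := hj1
  have hj2' : (j : ℕ) < (Finset.orderEmbOfCardLe (Dset l v m) hcard ⟨p - 1, by omega⟩ : ℕ) := hj2
  have hge : v ≤ (l.get j : ℕ) := h0c j hj1' (lt_trans hj2' hlast)
  have hlt : (l.get j : ℕ) < v := hj3
  omega

variable {n : ℕ} {l : List (Fin n)}

lemma Dset_succ_lt {m : ℕ} (hm : m < l.length) {w : ℕ}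
    (hw : w < (l.get ⟨m, hm⟩ : ℕ)) : Dset l w (m + 1) = Dset l w m := by
  ext i
  rw [mem_Dset, mem_Dset]
  constructor
  · rintro ⟨h1, h2, h3⟩
    have him : (i : ℕ) < m := by
      rcases (by omega : (i : ℕ) < m ∨ (i : ℕ) = m) with h | h
      · exact h
      · exfalso
        have hieq : i = ⟨m, hm⟩ := Fin.ext h
        rw [hieq] at h2
        omega
    exact ⟨him, h2, fun j hj1 hj2 => h3 j hj1 (by omega)⟩
  · rintro ⟨h1, h2, h3⟩
    refine ⟨by omega, h2, fun j hj1 hj2 => ?_⟩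
    rcases (by omega : (j : ℕ) < m ∨ (j : ℕ) = m) with h | h
    · exact h3 j hj1 h
    · have hjeq : j = ⟨m, hm⟩ := Fin.ext h
      rw [hjeq]
      omega

lemma Dset_succ_eq {m : ℕ} (hm : m < l.length) :
    Dset l (l.get ⟨m, hm⟩ : ℕ) (m + 1) = insert ⟨m, hm⟩ (Dset l (l.get ⟨m, hm⟩ : ℕ) m) := by
  ext i
  rw [Finset.mem_insert, mem_Dset, mem_Dset]
  constructor
  · rintro ⟨h1, h2, h3⟩
    rcases (by omega : (i : ℕ) < m ∨ (i : ℕ) = m) with h | h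
    · exact Or.inr ⟨h, h2, fun j hj1 hj2 => h3 j hj1 (by omega)⟩
    · exact Or.inl (Fin.ext h)
  · rintro (rfl | ⟨h1, h2, h3⟩)
    · refine ⟨Nat.lt_succ_self m, rfl, fun j hj1 hj2 => ?_⟩
      have hj1' : m < (j : ℕ) := hj1
      omega
    · refine ⟨by omega, h2, fun j hj1 hj2 => ?_⟩
      rcases (by omega : (j : ℕ) < m ∨ (j : ℕ) = m) with h | h
      · exact h3 j hj1 h
      · have hjeq : j = ⟨m, hm⟩ := Fin.ext h
        rw [hjeq]

lemma Dset_succ_gt {m : ℕ} (hm : m < l.length) {w : ℕ}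
    (hw : (l.get ⟨m, hm⟩ : ℕ) < w) : Dset l w (m + 1) = ∅ := by
  ext i
  simp only [Finset.notMem_empty, iff_false]
  rw [mem_Dset]
  rintro ⟨h1, h2, h3⟩
  rcases (by omega : (i : ℕ) < m ∨ (i : ℕ) = m) with h | h
  · have := h3 ⟨m, hm⟩ h (Nat.lt_succ_self m)
    omega
  · have hieq : i = ⟨m, hm⟩ := Fin.ext h
    rw [hieq] at h2
    omega

/-- The potential function: base-`p` encoding of the counters. -/
def stf (p n : ℕ) (l : List (Fin n)) (m : ℕ) : ℕ :=
  ∑ v ∈ range n, (Dset l v m).card * p ^ (n - 1 - v)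

lemma stf_step (p : ℕ) (hp : 2 ≤ p)
    (hproc : ∀ v : Fin n, ∀ idx : Fin p → Fin l.length,
      StrictMono idx → (∀ a, l.get (idx a) = v) →
      ∃ j : Fin l.length, idx ⟨0, by omega⟩ < j ∧ j < idx ⟨p - 1, by omega⟩ ∧ l.get j < v)
    (m : ℕ) (hm : m < l.length) :
    stf p n l m + 1 ≤ stf p n l (m + 1) := by
  have hvm : (l.get ⟨m, hm⟩ : ℕ) < n := (l.get ⟨m, hm⟩).isLt
  have split : ∀ f : ℕ → ℕ, ∑ v ∈ range n, f v =
      (∑ v ∈ Ico 0 (l.get ⟨m, hm⟩ : ℕ), f v) +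
      (f (l.get ⟨m, hm⟩ : ℕ) + ∑ v ∈ Ico ((l.get ⟨m, hm⟩ : ℕ) + 1) n, f v) := by
    intro f
    rw [range_eq_Ico, ← Finset.sum_Ico_consecutive f (Nat.zero_le _) hvm.le,
      Finset.sum_eq_sum_Ico_succ_bot hvm]
  rw [stf, stf, split, split]
  have hA : ∑ v ∈ Ico 0 (l.get ⟨m, hm⟩ : ℕ), (Dset l v (m + 1)).card * p ^ (n - 1 - v)
      = ∑ v ∈ Ico 0 (l.get ⟨m, hm⟩ : ℕ), (Dset l v m).card * p ^ (n - 1 - v) := by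
    refine Finset.sum_congr rfl fun v hv => ?_
    rw [Dset_succ_lt hm (mem_Ico.1 hv).2]
  have hT0 : ∑ v ∈ Ico ((l.get ⟨m, hm⟩ : ℕ) + 1) n,
      (Dset l v (m + 1)).card * p ^ (n - 1 - v) = 0 := by
    refine Finset.sum_eq_zero fun v hv => ?_
    rw [Dset_succ_gt hm (by have := (mem_Ico.1 hv).1; omega)]
    simp
  have hEq : (Dset l (l.get ⟨m, hm⟩ : ℕ) (m + 1)).card
      = (Dset l (l.get ⟨m, hm⟩ : ℕ) m).card + 1 := by
    rw [Dset_succ_eq hm, Finset.card_insert_of_notMem]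
    intro hmemm
    have h1 := (mem_Dset.1 hmemm).1
    have h2 : ((⟨m, hm⟩ : Fin l.length) : ℕ) = m := rfl
    omega
  have hT : ∑ v ∈ Ico ((l.get ⟨m, hm⟩ : ℕ) + 1) n, (Dset l v m).card * p ^ (n - 1 - v)
      ≤ p ^ (n - 1 - (l.get ⟨m, hm⟩ : ℕ)) - 1 := by
    calc ∑ v ∈ Ico ((l.get ⟨m, hm⟩ : ℕ) + 1) n, (Dset l v m).card * p ^ (n - 1 - v)
        ≤ ∑ v ∈ Ico ((l.get ⟨m, hm⟩ : ℕ) + 1) n, (p - 1) * p ^ (n - 1 - v) :=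
          Finset.sum_le_sum fun v _ =>
            Nat.mul_le_mul_right _ (card_Dset_le p n hp l hproc v m)
      _ = p ^ (n - 1 - (l.get ⟨m, hm⟩ : ℕ)) - 1 := tail p _ n (by omega) hvm
  rw [hA, hT0, hEq]
  have hd : 1 ≤ p ^ (n - 1 - (l.get ⟨m, hm⟩ : ℕ)) := Nat.one_le_pow _ _ (by omega)
  have hmul : ((Dset l (l.get ⟨m, hm⟩ : ℕ) m).card + 1) * p ^ (n - 1 - (l.get ⟨m, hm⟩ : ℕ))
      = (Dset l (l.get ⟨m, hm⟩ : ℕ) m).card * p ^ (n - 1 - (l.get ⟨m, hm⟩ : ℕ))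
        + p ^ (n - 1 - (l.get ⟨m, hm⟩ : ℕ)) := by ring
  have hT' : ∑ v ∈ Ico ((l.get ⟨m, hm⟩ : ℕ) + 1) n, (Dset l v m).card * p ^ (n - 1 - v)
      < p ^ (n - 1 - (l.get ⟨m, hm⟩ : ℕ)) :=
    lt_of_le_of_lt hT (Nat.sub_lt (by omega) one_pos)
  linarith

theorem aux (p n : ℕ) (hp : 2 ≤ p) (l : List (Fin n))
    (hproc : ∀ v : Fin n, ∀ idx : Fin p → Fin l.length,
      StrictMono idx → (∀ a, l.get (idx a) = v) →
      ∃ j : Fin l.length, idx ⟨0, by omega⟩ < j ∧ j < idx ⟨p - 1, by omega⟩ ∧ l.get j < v) :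
    l.length ≤ p ^ n - 1 := by
  have hmono : ∀ m, m ≤ l.length → m ≤ stf p n l m := by
    intro m
    induction m with
    | zero => intro _; exact Nat.zero_le _
    | succ m ih =>
      intro hm
      have h1 := ih (by omega)
      have h2 := stf_step p hp hproc m (by omega)
      omega
  have h1 := hmono l.length le_rfl
  have h2 : stf p n l l.length ≤ p ^ n - 1 := by
    rw [stf]
    calc ∑ v ∈ range n, (Dset l v l.length).card * p ^ (n - 1 - v)
        ≤ ∑ v ∈ range n, (p - 1) * p ^ (n - 1 - v) :=
          Finset.sum_le_sum fun v _ =>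
            Nat.mul_le_mul_right _ (card_Dset_le p n hp l hproc v _)
      _ = p ^ n - 1 := sumpow p n (by omega)
  omega

end Stmt4Aux

/-- Process lemma: a sequence of 0–1 vectors of length `k-1` (each with exactly one `1`,
encoded by the position of its `1`) satisfying the process condition with parameter `p`
has length at most `p^(k-1) - 1`. -/
theorem stmt_4 (p k : ℕ) (hp : 2 ≤ p) (hk : 2 ≤ k) (S : List (Fin (k - 1)))
    (hproc : ∀ v : Fin (k - 1), ∀ idx : Fin p → Fin S.length,
      StrictMono idx → (∀ a, S.get (idx a) = v) →
      ∃ j : Fin S.length, idx ⟨0, by omega⟩ < j ∧ j < idx ⟨p - 1, by omega⟩ ∧ S.get j < v) :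
    S.length ≤ p ^ (k - 1) - 1 := by
  exact Stmt4Aux.aux p (k - 1) hp S hproc
end

section
/- Let n ≥ 2 and k be positive integers. The number of permutations of {1, 2, ..., k} (equivalently, of multilinear words in k distinct letters) containing no decreasing subsequence of length n (i.e., no n positions i_1 < i_2 < ... < i_n with the letters at these positions in strictly decreasing order) is at most (n−1)^{2k}. -/
open Finset

/-- Decreasing chains (as finsets of positions) ending at `i`. -/
def chainsEnd {k : ℕ} (σ : Equiv.Perm (Fin k)) (i : Fin k) : Finset (Finset (Fin k)) :=
  Finset.univ.filter (fun c => i ∈ c ∧ (∀ a ∈ c, a ≤ i) ∧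
    ∀ a ∈ c, ∀ b ∈ c, a < b → σ b < σ a)

/-- Length of the longest decreasing subsequence ending at `i`. -/
def dlen {k : ℕ} (σ : Equiv.Perm (Fin k)) (i : Fin k) : ℕ :=
  (chainsEnd σ i).sup Finset.card

lemma singleton_mem_chainsEnd {k : ℕ} (σ : Equiv.Perm (Fin k)) (i : Fin k) :
    {i} ∈ chainsEnd σ i := by
  simp [chainsEnd]

lemma one_le_dlen {k : ℕ} (σ : Equiv.Perm (Fin k)) (i : Fin k) : 1 ≤ dlen σ i := by
  have h := Finset.le_sup (f := Finset.card) (singleton_mem_chainsEnd σ i)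
  rwa [Finset.card_singleton] at h

lemma exists_chain {k : ℕ} (σ : Equiv.Perm (Fin k)) (i : Fin k) :
    ∃ c ∈ chainsEnd σ i, c.card = dlen σ i := by
  have hne : (chainsEnd σ i).Nonempty := ⟨{i}, singleton_mem_chainsEnd σ i⟩
  obtain ⟨c, hc, hcard⟩ := Finset.exists_mem_eq_sup _ hne Finset.card
  exact ⟨c, hc, hcard.symm⟩

lemma dlen_lt_dlen {k : ℕ} (σ : Equiv.Perm (Fin k)) {i j : Fin k}
    (hij : i < j) (hσ : σ j < σ i) : dlen σ i < dlen σ j := by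
  obtain ⟨c, hc, hcard⟩ := exists_chain σ i
  rw [chainsEnd, Finset.mem_filter] at hc
  obtain ⟨-, hiC, hle, hchain⟩ := hc
  have hjC : j ∉ c := fun h => absurd (hle j h) (not_le.mpr hij)
  have hmem : insert j c ∈ chainsEnd σ j := by
    rw [chainsEnd, Finset.mem_filter]
    refine ⟨Finset.mem_univ _, Finset.mem_insert_self _ _, ?_, ?_⟩
    · intro a ha
      rcases Finset.mem_insert.mp ha with h | h
      · exact le_of_eq h
      · exact le_trans (hle a h) (le_of_lt hij)
    · intro a ha b hb hab
      rcases Finset.mem_insert.mp ha with h | h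
      · rcases Finset.mem_insert.mp hb with h' | h'
        · exact absurd (h ▸ h' ▸ hab) (lt_irrefl _)
        · exact absurd (lt_of_lt_of_le (h ▸ hab) (hle b h')) (not_lt.mpr (le_of_lt hij))
      · rcases Finset.mem_insert.mp hb with h' | h'
        · subst h'
          rcases eq_or_lt_of_le (hle a h) with h'' | h''
          · exact h'' ▸ hσ
          · exact lt_trans hσ (hchain a h i hiC h'')
        · exact hchain a h b h' hab
  have : (insert j c).card ≤ dlen σ j := Finset.le_sup (f := Finset.card) hmem
  rw [Finset.card_insert_of_notMem hjC, hcard] at this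
  omega

lemma dlen_le {n k : ℕ} (hn : 2 ≤ n) (σ : Equiv.Perm (Fin k))
    (hσ : ¬ ∃ f : Fin n → Fin k, StrictMono f ∧ StrictAnti (fun i => σ (f i)))
    (i : Fin k) : dlen σ i ≤ n - 1 := by
  by_contra h
  push_neg at h
  have hn' : n ≤ dlen σ i := by omega
  obtain ⟨c, hc, hcard⟩ := exists_chain σ i
  rw [chainsEnd, Finset.mem_filter] at hc
  obtain ⟨-, hiC, hle, hchain⟩ := hc
  have hnc : n ≤ c.card := hcard ▸ hn'
  refine hσ ⟨fun t => c.orderEmbOfFin rfl (Fin.castLE hnc t), ?_, ?_⟩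
  · exact fun a b hab => (c.orderEmbOfFin rfl).strictMono (by simpa using hab)
  · intro a b hab
    have h1 : (c.orderEmbOfFin rfl (Fin.castLE hnc a)) < (c.orderEmbOfFin rfl (Fin.castLE hnc b)) :=
      (c.orderEmbOfFin rfl).strictMono (by simpa using hab)
    exact hchain _ (Finset.orderEmbOfFin_mem c rfl _) _ (Finset.orderEmbOfFin_mem c rfl _) h1

/-- Within a class of constant `dlen`, positions are mapped increasingly. -/
lemma dlen_class_mono {k : ℕ} (σ : Equiv.Perm (Fin k)) {i j : Fin k}
    (hij : i < j) (hd : dlen σ i = dlen σ j) : σ i < σ j := by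
  rcases lt_trichotomy (σ i) (σ j) with h | h | h
  · exact h
  · exact absurd (σ.injective h) (ne_of_lt hij)
  · exact absurd hd (ne_of_lt (dlen_lt_dlen σ hij h))

/-- Two strictly monotone maps on a finset with the same image agree. -/
lemma strictMonoOn_image_unique {α β : Type*} [LinearOrder α] [LinearOrder β] [DecidableEq β]
    (s : Finset α) (f g : α → β) (hf : StrictMonoOn f s) (hg : StrictMonoOn g s)
    (h : s.image f = s.image g) : ∀ x ∈ s, f x = g x := by
  by_contra hcon
  push_neg at hcon
  obtain ⟨x0, hx0s, hx0⟩ := hcon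
  have hP : (s.filter (fun x => f x ≠ g x)).Nonempty := ⟨x0, Finset.mem_filter.mpr ⟨hx0s, hx0⟩⟩
  set x := (s.filter (fun x => f x ≠ g x)).min' hP with hxdef
  have hxmem := Finset.mem_filter.mp ((s.filter (fun x => f x ≠ g x)).min'_mem hP)
  have hmin : ∀ y ∈ s, y < x → f y = g y := by
    intro y hy hyx
    by_contra hne
    exact absurd (Finset.min'_le _ y (Finset.mem_filter.mpr ⟨hy, hne⟩)) (not_le.mpr hyx)
  have key : ∀ (f g : α → β), StrictMonoOn f s → StrictMonoOn g s →
      s.image f = s.image g → (∀ y ∈ s, y < x → f y = g y) → ¬ f x < g x := by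
    intro f g hf hg himg hmn hlt
    have : f x ∈ s.image g := himg ▸ Finset.mem_image_of_mem f hxmem.1
    obtain ⟨y, hy, hgy⟩ := Finset.mem_image.mp this
    have hyx : y < x := (hg.lt_iff_lt hy hxmem.1).mp (hgy ▸ hlt)
    have heq : f y = g y := hmn y hy hyx
    have hlt' : f y < f x := hf hy hxmem.1 hyx
    rw [heq, hgy] at hlt'
    exact lt_irrefl _ hlt'
  rcases lt_trichotomy (f x) (g x) with h1 | h1 | h1
  · exact key f g hf hg h hmin h1
  · exact hxmem.2 h1
  · exact key g f hg hf h.symm (fun y hy hyx => (hmin y hy hyx).symm) h1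

/-- The number of permutations of `{1, …, k}` with no decreasing subsequence of length `n`
is at most `(n-1)^(2k)`. -/
theorem stmt_6 (n k : ℕ) (hn : 2 ≤ n) (hk : 1 ≤ k) :
    (Finset.univ.filter (fun σ : Equiv.Perm (Fin k) =>
      ¬ ∃ f : Fin n → Fin k, StrictMono f ∧ StrictAnti (fun i => σ (f i)))).card ≤
    (n - 1) ^ (2 * k) := by
  classical
  set A := (Finset.univ.filter (fun σ : Equiv.Perm (Fin k) =>
      ¬ ∃ f : Fin n → Fin k, StrictMono f ∧ StrictAnti (fun i => σ (f i)))) with hA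
  have hbound : ∀ m : ℕ, min (m - 1) (n - 2) < n - 1 := fun m =>
    lt_of_le_of_lt (min_le_right _ _) (by omega)
  set F : Equiv.Perm (Fin k) → (Fin k → Fin (n - 1)) × (Fin k → Fin (n - 1)) :=
    fun σ => (fun i => ⟨min (dlen σ i - 1) (n - 2), hbound _⟩,
              fun v => ⟨min (dlen σ (σ⁻¹ v) - 1) (n - 2), hbound _⟩) with hF
  have hrec : ∀ σ ∈ A, ∀ i, dlen σ i = ((F σ).1 i).val + 1 := by
    intro σ hσ i
    have h1 := one_le_dlen σ i
    have h2 := dlen_le hn σ (Finset.mem_filter.mp hσ).2 i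
    simp only [hF]
    omega
  have hrec2 : ∀ σ ∈ A, ∀ v, dlen σ (σ⁻¹ v) = ((F σ).2 v).val + 1 := by
    intro σ hσ v
    have h1 := one_le_dlen σ (σ⁻¹ v)
    have h2 := dlen_le hn σ (Finset.mem_filter.mp hσ).2 (σ⁻¹ v)
    simp only [hF]
    omega
  have hinj : Set.InjOn F A := by
    intro σ hσ τ hτ hFeq
    have hpos : ∀ i, dlen σ i = dlen τ i := by
      intro i
      rw [hrec σ hσ i, hrec τ hτ i, hFeq]
    have hval : ∀ v, dlen σ (σ⁻¹ v) = dlen τ (τ⁻¹ v) := by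
      intro v
      rw [hrec2 σ hσ v, hrec2 τ hτ v, hFeq]
    apply Equiv.ext
    intro i
    set t := dlen σ i with ht
    set s : Finset (Fin k) := Finset.univ.filter (fun j => dlen σ j = t) with hs
    have hsmem : i ∈ s := by simp [hs, ht]
    have hmσ : StrictMonoOn σ s := by
      intro a ha b hb hab
      have ha' := (Finset.mem_filter.mp ha).2
      have hb' := (Finset.mem_filter.mp hb).2
      exact dlen_class_mono σ hab (ha'.trans hb'.symm)
    have hmτ : StrictMonoOn τ s := by
      intro a ha b hb hab
      have ha' := (Finset.mem_filter.mp ha).2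
      have hb' := (Finset.mem_filter.mp hb).2
      exact dlen_class_mono τ hab (by rw [← hpos a, ← hpos b]; exact ha'.trans hb'.symm)
    have himσ : s.image σ = Finset.univ.filter (fun v => dlen σ (σ⁻¹ v) = t) := by
      ext v
      simp only [hs, Finset.mem_image, Finset.mem_filter, Finset.mem_univ, true_and]
      constructor
      · rintro ⟨j, hj, rfl⟩
        simpa using hj
      · intro hv
        exact ⟨σ⁻¹ v, hv, by simp⟩
    have himτ : s.image τ = Finset.univ.filter (fun v => dlen σ (σ⁻¹ v) = t) := by
      ext v
      simp only [hs, Finset.mem_image, Finset.mem_filter, Finset.mem_univ, true_and]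
      constructor
      · rintro ⟨j, hj, rfl⟩
        rw [hval]
        rw [hpos] at hj
        simpa using hj
      · intro hv
        refine ⟨τ⁻¹ v, ?_, by simp⟩
        rw [hpos, ← hval]
        exact hv
    exact strictMonoOn_image_unique s σ τ hmσ hmτ (himσ.trans himτ.symm) i hsmem
  have hcard : A.card ≤ Fintype.card ((Fin k → Fin (n - 1)) × (Fin k → Fin (n - 1))) := by
    rw [← Finset.card_univ]
    exact Finset.card_le_card_of_injOn F (fun σ _ => Finset.mem_univ _) hinj
  calc A.card ≤ _ := hcard
    _ = (n - 1) ^ (2 * k) := by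
        simp [Fintype.card_prod, Fintype.card_fun, two_mul, pow_add]
end

section
/- Let x be a nonempty word over a linearly ordered alphabet and let v'_1, ..., v'_n be words each lexicographically strictly greater than x and of length equal to |x| (in particular, none is a prefix of x). Then the words v'_1, x·v'_2, x^2·v'_3, ..., x^{n−1}·v'_n are in strictly lexicographically decreasing order: v'_1 ≻ x·v'_2 ≻ x^2·v'_3 ≻ ... ≻ x^{n−1}·v'_n. -/
private lemma lex_append_of_length_le {α : Type*} {r : α → α → Prop} :
    ∀ {x b : List α}, List.Lex r x b → b.length ≤ x.length →
      ∀ s : List α, List.Lex r (x ++ s) b := by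
  intro x b h
  induction h with
  | nil => intro hl; simp at hl
  | cons _ ih => intro hl s; exact List.Lex.cons (ih (by simpa using hl) s)
  | rel h => intro _ _; exact List.Lex.rel h

/-- Lemma: if `x` is a nonempty word and `v'₁, …, v'ₙ` are words of length `|x|`, each
lexicographically strictly greater than `x`, then the words
`v'₁, x·v'₂, x²·v'₃, …, x^(n-1)·v'ₙ` are strictly lexicographically decreasing. -/
theorem stmt_15 {α : Type*} [LinearOrder α] (n : ℕ) (x : List α) (hx : x ≠ [])
    (v : Fin n → List α) (hlen : ∀ i, (v i).length = x.length)
    (hgt : ∀ i, x < v i) :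
    ∀ i j : Fin n, i < j →
      (List.replicate (j : ℕ) x).flatten ++ v j <
      (List.replicate (i : ℕ) x).flatten ++ v i := by
  intro i j hij
  have hij' : (i : ℕ) < (j : ℕ) := hij
  obtain ⟨k, hk⟩ : ∃ k, (j : ℕ) = (i : ℕ) + (k + 1) :=
    ⟨(j : ℕ) - (i : ℕ) - 1, by omega⟩
  show List.Lex (· < ·) _ _
  rw [hk, List.replicate_add, List.flatten_append, List.append_assoc]
  apply List.Lex.append_left
  have hlex : List.Lex (· < ·) x (v i) := hgt i
  have := lex_append_of_length_le hlex (le_of_eq (hlen i))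
    ((List.replicate k x).flatten ++ v j)
  simpa [List.replicate_succ, List.append_assoc] using this
end

section
/- Let n ≥ 2 and l ≥ 1. The essential height of the set of non-n-divisible words over an l-letter alphabet, over the set of words of length less than n, is less than Υ(n,l) = 2·n^{3·⌈log_3 n⌉ + 4}·l. Concretely: in any non-n-divisible word W over the alphabet, the number of pairwise disjoint maximal periodic fragments of the form x^{2n} (with |x| < n, the fragments separated by subwords of length > n comparable with the preceding period) is less than 2·n^{3·⌈log_3 n⌉+4}·l. -/
/-!
If `n` factors of `W` sit at increasing positions, each ends before the next begins, and each
is below its predecessor at a letter where they differ, then cutting `W` at these positions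
exhibits `n`-divisibility. In a non-`n`-divisible word this bounds two quantities.

A period `x` heads at most `2n - 2` fragments `x ^ (2n)`: otherwise `n` of the tails following
the fragments lie on the same side of `x`, and starting one period further out in each
successive fragment gives `n` decreasing factors.

At most `3 ^ c (n - 1) ^ (3c) l` distinct factors of length `m ≤ 3 ^ c` occur at pairwise
disjoint positions. Cut each factor into three parts of length at most `3 ^ (c - 1)`. No part
decreases strictly along `n` positions, so by Mirsky's theorem the positions fall into
`(n - 1) ^ 3` classes on which all three parts increase weakly. Along a class each step brings
a new value in one of the parts, so induction on `c` bounds each class by three times the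
previous bound.

With `c = ⌈log₃ n⌉`, so that `n ≤ 3 ^ c ≤ n ^ 2`, and the `n` possible period lengths this gives
`s ≤ 2 (n - 1) · n · 3 ^ c (n - 1) ^ (3c) l < 2 n ^ (3c + 4) l`.
-/

namespace List

variable {α : Type*}

/-- Unlike `b < a`, this is preserved by extending `b` and `a` on the right. -/
def LtAtMismatch [LT α] (b a : List α) : Prop :=
  ∃ c r s u v, v < u ∧ b = c ++ v :: r ∧ a = c ++ u :: s

namespace LtAtMismatch

variable [LT α] {a a' b b' : List α}

theorem lt (h : LtAtMismatch b a) : b < a := by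
  obtain ⟨c, r, s, u, v, hvu, rfl, rfl⟩ := h
  exact append_left_lt (Lex.rel hvu)

theorem ne_nil_left (h : LtAtMismatch b a) : b ≠ [] := by
  obtain ⟨c, r, s, u, v, -, rfl, -⟩ := h
  simp

theorem append_left (c : List α) (h : LtAtMismatch b a) : LtAtMismatch (c ++ b) (c ++ a) := by
  obtain ⟨d, r, s, u, v, hvu, rfl, rfl⟩ := h
  exact ⟨c ++ d, r, s, u, v, hvu, by simp, by simp⟩

theorem of_prefix (h : LtAtMismatch b a) (hb : b <+: b') (ha : a <+: a') :
    LtAtMismatch b' a' := by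
  obtain ⟨c, r, s, u, v, hvu, rfl, rfl⟩ := h
  obtain ⟨t, rfl⟩ := hb
  obtain ⟨t', rfl⟩ := ha
  exact ⟨c, r ++ t, s ++ t', u, v, hvu, by simp, by simp⟩

theorem of_lt_of_length_eq : ∀ {b a : List α}, b < a → b.length = a.length → LtAtMismatch b a
  | [], [], h, _ => absurd h (not_lt_nil _)
  | [], _ :: _, _, hl | _ :: _, [], _, hl => by simp at hl
  | v :: r, u :: s, h, hl => by
    rcases cons_lt_cons_iff.mp h with hvu | ⟨rfl, hrs⟩
    · exact ⟨[], r, s, u, v, hvu, rfl, rfl⟩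
    · exact (of_lt_of_length_eq hrs (by simpa using hl)).append_left [v]

end LtAtMismatch

end List

section Divisibility

variable {α : Type*} [LinearOrder α] {W : List α}

open List

theorem exists_factorization_of_windows : ∀ {n : ℕ} (p : Fin (n + 1) → ℕ)
    (w : Fin (n + 1) → List α), (∀ i, w i <+: W.drop (p i)) →
    (∀ i : Fin n, p i.castSucc + (w i.castSucc).length ≤ p i.succ) →
    (∀ i : Fin n, LtAtMismatch (w i.succ) (w i.castSucc)) → w (Fin.last n) ≠ [] →
    ∃ us : List (List α), us.length = n + 1 ∧ (∀ u ∈ us, u ≠ []) ∧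
      W.drop (p 0) = us.flatten ∧ us.IsChain (fun a b => b < a) ∧ ∀ u ∈ us.head?, w 0 <+: u
  | 0, p, w, hpre, _, _, hlast => by
    refine ⟨[W.drop (p 0)], rfl, ?_, by simp, by simp, by simpa using hpre 0⟩
    simpa using (hpre 0).ne_nil hlast
  | n + 1, p, w, hpre, hgap, hdec, hlast => by
    obtain ⟨us, hlen, hne, hflat, hchain, hhead⟩ :=
      exists_factorization_of_windows (p ∘ Fin.succ) (w ∘ Fin.succ) (fun i => hpre i.succ)
        (fun i => hgap i.succ) (fun i => hdec i.succ) hlast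
    obtain ⟨u', us, rfl⟩ := exists_cons_of_length_eq_add_one hlen
    have hgap0 : p 0 + (w 0).length ≤ p 1 := hgap 0
    set u := (W.drop (p 0)).take (p 1 - p 0)
    have hw0 : w 0 <+: u := prefix_take_iff.mpr ⟨hpre 0, by omega⟩
    have hlt : u' < u := ((hdec 0).of_prefix (by simpa using hhead) hw0).lt
    have hsplit : W.drop (p 0) = u ++ W.drop (p 1) := by
      rw [← take_append_drop (p 1 - p 0) (W.drop (p 0)), drop_drop, Nat.add_sub_cancel' (by omega)]
    refine ⟨u :: u' :: us, by simp [hlen], ?_, ?_, ?_, by simpa using hw0⟩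
    · intro v hv
      rcases mem_cons.mp hv with rfl | hv
      · exact fun h => not_lt_nil _ (h ▸ hlt)
      · exact hne v hv
    · simpa [hsplit] using hflat
    · exact isChain_cons_cons.mpr ⟨hlt, hchain⟩

theorem IsNDivisible.of_windows {n : ℕ} (p : Fin (n + 2) → ℕ) (w : Fin (n + 2) → List α)
    (hpre : ∀ i, w i <+: W.drop (p i))
    (hgap : ∀ i : Fin (n + 1), p i.castSucc + (w i.castSucc).length ≤ p i.succ)
    (hdec : ∀ i : Fin (n + 1), LtAtMismatch (w i.succ) (w i.castSucc)) :
    IsNDivisible (n + 2) W := by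
  obtain ⟨us, hlen, hne, hflat, hchain, -⟩ := exists_factorization_of_windows p w hpre hgap hdec
    (by simpa using (hdec (Fin.last n)).ne_nil_left)
  exact ⟨W.take (p 0), us, hlen, hne, by rw [← hflat, take_append_drop], hchain⟩

end Divisibility

section Chains

open Finset

variable {α β : Type*} [LinearOrder α] [LinearOrder β]

theorem StrictAntiOn.insert_of_lt {g : α → β} {S : Set α} {a b : α} (h : StrictAntiOn g S)
    (haS : a ∈ S) (hSa : ∀ c ∈ S, c ≤ a) (hab : a < b) (hg : g b < g a) :
    StrictAntiOn g (insert b S) := by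
  rintro c (rfl | hc) d (rfl | hd) hcd
  · exact absurd hcd (lt_irrefl _)
  · exact absurd ((hSa d hd).trans hab.le) hcd.not_ge
  · rcases (hSa c hc).lt_or_eq with hca | rfl
    exacts [hg.trans (h hc haS hca), hg]
  · exact h hc hd hcd

/-- Mirsky's theorem, dual form: the rank of `a` is the length of the longest strictly
`g`-decreasing chain ending at `a`. -/
theorem exists_rank_of_card_le_of_strictAntiOn (P : Finset α) (g : α → β) (k : ℕ)
    (hchain : ∀ S ⊆ P, StrictAntiOn g (S : Set α) → S.card ≤ k) :
    ∃ ρ : α → ℕ, (∀ a ∈ P, ρ a ∈ Icc 1 k) ∧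
      ∀ a ∈ P, ∀ b ∈ P, a < b → ρ a = ρ b → g a ≤ g b := by
  let chains (a : α) := P.powerset.filter fun S : Finset α => a ∈ S ∧ (∀ b ∈ S, b ≤ a) ∧
    StrictAntiOn g (S : Set α)
  have hsingleton {a} (ha : a ∈ P) : {a} ∈ chains a := by
    simp [chains, ha, Set.strictAntiOn_singleton]
  refine ⟨fun a => (chains a).sup card, fun a ha => mem_Icc.mpr ⟨?_, ?_⟩, ?_⟩
  · exact le_sup (f := card) (hsingleton ha)
  · refine Finset.sup_le fun S hS => ?_
    obtain ⟨hSP, -, -, hS⟩ := by simpa [chains] using hS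
    exact hchain S hSP hS
  · intro a ha b hb hab hρ
    by_contra! hgba
    obtain ⟨S, hS, hSsup⟩ := exists_mem_eq_sup (chains a) ⟨_, hsingleton ha⟩ card
    obtain ⟨hSP, haS, hSa, hSanti⟩ := by simpa [chains] using hS
    have hbS : b ∉ S := fun h => (hSa b h).not_gt hab
    have hext : insert b S ∈ chains b := by
      refine mem_filter.mpr ⟨mem_powerset.mpr (insert_subset hb hSP), mem_insert_self b S,
        fun c hc => ?_, by simpa using hSanti.insert_of_lt haS hSa hab hgba⟩
      rcases mem_insert.mp hc with rfl | hc
      exacts [le_rfl, (hSa c hc).trans hab.le]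
    have := le_sup (f := card) hext
    simp only [card_insert_of_notMem hbS] at this
    simp only at hρ
    omega

/-- Along a chain on which every `g i` is monotone, each step increases the number of distinct
values seen so far in some coordinate. -/
theorem card_le_sum_card_image_of_monotoneOn {ι : Type*} [Fintype ι] [Nonempty ι]
    [DecidableEq β] (C : Finset α) (g : ι → α → β) (hmono : ∀ i, MonotoneOn (g i) C)
    (hinj : ∀ a ∈ C, ∀ b ∈ C, (∀ i, g i a = g i b) → a = b) :
    C.card ≤ ∑ i, (C.image (g i)).card := by
  let seen (a : α) := ∑ i, ((C.filter fun c => c ≤ a).image (g i)).card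
  have hstrict : StrictMonoOn seen C := by
    intro a ha b hb hab
    obtain ⟨i, hi⟩ : ∃ i, g i a ≠ g i b := by
      by_contra! h
      exact hab.ne (hinj a ha b hb h)
    have hsub : (C.filter fun c => c ≤ a) ⊆ C.filter fun c => c ≤ b := fun c hc => by
      simp only [mem_filter] at hc ⊢
      exact ⟨hc.1, hc.2.trans hab.le⟩
    refine sum_lt_sum (fun j _ => card_le_card (image_subset_image hsub)) ⟨i, mem_univ i, ?_⟩
    refine card_lt_card ((ssubset_iff_of_subset (image_subset_image hsub)).mpr
      ⟨g i b, mem_image_of_mem _ (mem_filter.mpr ⟨hb, le_rfl⟩), fun hmem => ?_⟩)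
    obtain ⟨c, hc, hcb⟩ := mem_image.mp hmem
    obtain ⟨hcC, hca⟩ := mem_filter.mp hc
    exact hi (le_antisymm (hmono i ha hb hab.le) (hcb ▸ hmono i hcC ha hca))
  have hmaps : ∀ a ∈ C, seen a ∈ Icc 1 (∑ i, (C.image (g i)).card) := by
    intro a ha
    refine mem_Icc.mpr ⟨?_, sum_le_sum fun i _ => card_le_card
      (image_subset_image (filter_subset _ _))⟩
    obtain ⟨i⟩ := ‹Nonempty ι›
    exact sum_pos' (fun _ _ => Nat.zero_le _) ⟨i, mem_univ i,
      card_pos.mpr ⟨g i a, mem_image_of_mem _ (mem_filter.mpr ⟨ha, le_rfl⟩)⟩⟩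
  simpa using card_le_card_of_injOn seen hmaps hstrict.injOn

end Chains

section Windows

open Finset List

variable {α : Type*} {W : List α}

def window (W : List α) (p m : ℕ) : List α := (W.drop p).take m

theorem window_prefix (W : List α) (p m : ℕ) : window W p m <+: W.drop p :=
  take_prefix _ _

theorem length_window {p m : ℕ} (h : p + m ≤ W.length) : (window W p m).length = m := by
  simp only [window, length_take, length_drop]
  omega

theorem length_window_le (W : List α) (p m : ℕ) : (window W p m).length ≤ m :=
  length_take_le _ _

theorem window_add (W : List α) (p a b : ℕ) :
    window W p (a + b) = window W p a ++ window W (p + a) b := by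
  simp [window, take_add, drop_drop]

variable [LinearOrder α] {n : ℕ}

theorem card_lt_of_strictAntiOn_window (hn : 2 ≤ n) (hW : ¬ IsNDivisible n W) {δ μ : ℕ}
    {S : Finset ℕ} (hlen : ∀ p ∈ S, p + δ + μ ≤ W.length)
    (hgap : ∀ p ∈ S, ∀ p' ∈ S, p < p' → p + μ ≤ p')
    (hanti : StrictAntiOn (fun p => window W (p + δ) μ) S) : S.card < n := by
  by_contra! hS
  obtain ⟨k, rfl⟩ : ∃ k, n = k + 2 := ⟨n - 2, by omega⟩
  obtain ⟨e, he⟩ : ∃ e : Fin (k + 2) ↪o ℕ, ∀ i, e i ∈ S :=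
    ⟨_, S.orderEmbOfCardLe_mem hS⟩
  refine hW (IsNDivisible.of_windows (fun i => e i + δ) (fun i => window W (e i + δ) μ)
    (fun i => window_prefix _ _ _) (fun i => ?_) (fun i => ?_))
  · have := hgap _ (he _) _ (he _) (e.strictMono i.castSucc_lt_succ)
    have := length_window_le W (e i.castSucc + δ) μ
    omega
  · refine .of_lt_of_length_eq (hanti (he _) (he _) (e.strictMono i.castSucc_lt_succ)) ?_
    rw [length_window (hlen _ (he _)), length_window (hlen _ (he _))]

end Windows

section WindowCount

open Finset

variable {α : Type*} [LinearOrder α] {W : List α} {n : ℕ}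

theorem card_le_of_monotoneOn_parts {ι : Type*} [Fintype ι] [Nonempty ι] {m B : ℕ}
    (off len : ι → ℕ) (hoff : ∀ i, off i + len i ≤ m)
    (hdet : ∀ p p', (∀ i, window W (p + off i) (len i) = window W (p' + off i) (len i)) →
      window W p m = window W p' m)
    (hB : ∀ i, ∀ P : Finset ℕ, (∀ p ∈ P, p + len i ≤ W.length) →
      (∀ p ∈ P, ∀ p' ∈ P, p < p' → p + len i ≤ p') → (P.image (window W · (len i))).card ≤ B)
    {C : Finset ℕ} (hlen : ∀ p ∈ C, p + m ≤ W.length)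
    (hgap : ∀ p ∈ C, ∀ p' ∈ C, p < p' → p + m ≤ p') (hinj : Set.InjOn (window W · m) C)
    (hmono : ∀ i, MonotoneOn (fun p => window W (p + off i) (len i)) C) :
    C.card ≤ Fintype.card ι * B := by
  calc C.card ≤ ∑ i, (C.image fun p => window W (p + off i) (len i)).card :=
        card_le_sum_card_image_of_monotoneOn C _ hmono fun a ha b hb h => hinj ha hb (hdet a b h)
    _ ≤ ∑ _i : ι, B := sum_le_sum fun i _ => by
        rw [show (C.image fun p => window W (p + off i) (len i)) =
          (C.image (· + off i)).image (window W · (len i)) by rw [image_image]; rfl]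
        refine hB i _ (fun p hp => ?_) fun p hp p' hp' h => ?_
        · obtain ⟨a, ha, rfl⟩ := mem_image.mp hp
          have := hlen a ha; have := hoff i; omega
        · obtain ⟨a, ha, rfl⟩ := mem_image.mp hp
          obtain ⟨b, hb, rfl⟩ := mem_image.mp hp'
          have := hgap a ha b hb (by omega); have := hoff i; omega
    _ = Fintype.card ι * B := by simp

/-- Positions with the same Mirsky ranks for all parts carry weakly increasing parts. -/
theorem card_image_window_le_of_parts {ι : Type*} [Fintype ι] [Nonempty ι] (hn : 2 ≤ n)
    (hW : ¬ IsNDivisible n W) {m B : ℕ} (off len : ι → ℕ) (hoff : ∀ i, off i + len i ≤ m)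
    (hdet : ∀ p p', (∀ i, window W (p + off i) (len i) = window W (p' + off i) (len i)) →
      window W p m = window W p' m)
    (hB : ∀ i, ∀ P : Finset ℕ, (∀ p ∈ P, p + len i ≤ W.length) →
      (∀ p ∈ P, ∀ p' ∈ P, p < p' → p + len i ≤ p') → (P.image (window W · (len i))).card ≤ B)
    (P : Finset ℕ) (hlen : ∀ p ∈ P, p + m ≤ W.length)
    (hgap : ∀ p ∈ P, ∀ p' ∈ P, p < p' → p + m ≤ p') :
    (P.image (window W · m)).card ≤ Fintype.card ι * B * (n - 1) ^ Fintype.card ι := by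
  classical
  obtain ⟨R, hRP, hRinj, hRimg⟩ := exists_subset_injOn_image_eq_of_surjOn (P : Set ℕ)
    (P.image (window W · m)) (fun v hv => by simpa using hv)
  rw [← hRimg, card_image_of_injOn hRinj]
  have hlenR : ∀ p ∈ R, p + m ≤ W.length := fun p hp => hlen p (hRP hp)
  have hgapR : ∀ p ∈ R, ∀ p' ∈ R, p < p' → p + m ≤ p' := fun p hp p' hp' =>
    hgap p (hRP hp) p' (hRP hp')
  have hrank (i : ι) := exists_rank_of_card_le_of_strictAntiOn R
    (fun p => window W (p + off i) (len i)) (n - 1) fun S hSR hanti =>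
      Nat.le_sub_one_of_lt (card_lt_of_strictAntiOn_window hn hW
        (fun p hp => by have := hlenR p (hSR hp); have := hoff i; omega)
        (fun p hp p' hp' h => by have := hgapR p (hSR hp) p' (hSR hp') h; have := hoff i; omega)
        hanti)
  choose ρ hρ hρmono using hrank
  refine (card_le_mul_card_image_of_maps_to (f := fun p i => ρ i p)
    (t := Fintype.piFinset fun _ => Icc 1 (n - 1))
    (fun p hp => Fintype.mem_piFinset.mpr fun i => hρ i p hp) (Fintype.card ι * B)
    fun v _ => ?_).trans_eq (by simp [Fintype.card_piFinset])
  have hCR : (R.filter fun p => (fun i => ρ i p) = v) ⊆ R := filter_subset _ _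
  refine card_le_of_monotoneOn_parts off len hoff hdet hB (fun p hp => hlenR p (hCR hp))
    (fun p hp p' hp' => hgapR p (hCR hp) p' (hCR hp')) (hRinj.mono (coe_subset.mpr hCR))
    fun i a ha b hb hab => ?_
  rcases hab.lt_or_eq with hab | rfl
  · exact hρmono i a (hCR ha) b (hCR hb) hab
      (congrFun ((mem_filter.mp ha).2.trans (mem_filter.mp hb).2.symm) i)
  · exact le_rfl

variable [Fintype α] [Nonempty α]

theorem card_image_window_le_of_le_one {m : ℕ} (hm : m ≤ 1) (P : Finset ℕ)
    (hlen : ∀ p ∈ P, p + m ≤ W.length) : (P.image (window W · m)).card ≤ Fintype.card α := by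
  interval_cases m
  · calc (P.image (window W · 0)).card ≤ ({[]} : Finset (List α)).card :=
          card_le_card fun v hv => by obtain ⟨p, -, rfl⟩ := mem_image.mp hv; simp [window]
      _ ≤ Fintype.card α := Fintype.card_pos
  · calc (P.image (window W · 1)).card ≤ (univ.image fun a : α => [a]).card :=
          card_le_card fun v hv => by
            obtain ⟨p, hp, rfl⟩ := mem_image.mp hv
            obtain ⟨a, ha⟩ := List.length_eq_one_iff.mp (length_window (hlen p hp))
            exact mem_image.mpr ⟨a, mem_univ a, ha.symm⟩
      _ ≤ Fintype.card α := card_image_le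

theorem card_image_window_le (hn : 2 ≤ n) (hW : ¬ IsNDivisible n W) (c : ℕ) :
    ∀ m ≤ 3 ^ c, ∀ P : Finset ℕ, (∀ p ∈ P, p + m ≤ W.length) →
      (∀ p ∈ P, ∀ p' ∈ P, p < p' → p + m ≤ p') →
      (P.image (window W · m)).card ≤ 3 ^ c * (n - 1) ^ (3 * c) * Fintype.card α := by
  induction c with
  | zero =>
    intro m hm P hlen _
    simpa using card_image_window_le_of_le_one (by simpa using hm) P hlen
  | succ c ih =>
    intro m hm P hlen hgap
    obtain ⟨len, hlen3, rfl⟩ : ∃ len : Fin 3 → ℕ, (∀ i, len i ≤ 3 ^ c) ∧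
        m = len 0 + len 1 + len 2 :=
      ⟨![min m (3 ^ c), min (m - min m (3 ^ c)) (3 ^ c),
        m - min m (3 ^ c) - min (m - min m (3 ^ c)) (3 ^ c)],
        fun i => by fin_cases i <;> simp; rw [pow_succ] at hm; omega, by simp⟩
    have hparts := card_image_window_le_of_parts hn hW ![0, len 0, len 0 + len 1] len
      (fun i => by fin_cases i <;> simp; omega)
      (fun p p' h => by
        have h0 := h 0; have h1 := h 1; have h2 := h 2
        simp only [Fin.isValue, Matrix.cons_val, add_zero] at h0 h1 h2
        simp only [window_add, h0, h1, h2])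
      (fun i => ih (len i) (hlen3 i)) P hlen hgap
    refine hparts.trans_eq ?_
    simp only [Fintype.card_fin]
    ring

end WindowCount

section Fragments

open Finset List

variable {α : Type*} {W x : List α} {N : ℕ}

theorem window_eq_of_fragment {q : ℕ} (hN : 0 < N)
    (hocc : (W.drop q).take (N * x.length) = (replicate N x).flatten) :
    window W q x.length = x := by
  obtain ⟨N, rfl⟩ : ∃ k, N = k + 1 := ⟨N - 1, by omega⟩
  have := congrArg (take x.length) hocc
  rwa [take_take, Nat.min_eq_left (Nat.le_mul_of_pos_left _ hN), replicate_succ, flatten_cons,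
    take_left] at this

theorem window_of_fragment {q k : ℕ} (hk : k ≤ N)
    (hocc : (W.drop q).take (N * x.length) = (replicate N x).flatten)
    (hlen : q + N * x.length ≤ W.length) :
    window W (q + (N - k) * x.length) (k * x.length + x.length) =
      (replicate k x).flatten ++ window W (q + N * x.length) x.length := by
  have hNk : (N - k) * x.length + k * x.length = N * x.length := by
    rw [← Nat.add_mul, Nat.sub_add_cancel hk]
  have hsplit : window W q ((N - k) * x.length) ++
      window W (q + (N - k) * x.length) (k * x.length) =
      (replicate (N - k) x).flatten ++ (replicate k x).flatten := by
    rw [← window_add, hNk, ← flatten_append, ← replicate_add, Nat.sub_add_cancel hk]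
    exact hocc
  rw [window_add, ← (append_inj hsplit (by rw [length_window (by omega)]; simp)).2, add_assoc,
    hNk]

variable [LinearOrder α] {n : ℕ} {Q : Finset ℕ}

theorem IsNDivisible.of_fragments
    (hocc : ∀ q ∈ Q, (W.drop q).take (N * x.length) = (replicate N x).flatten)
    (hlen : ∀ q ∈ Q, q + N * x.length + x.length ≤ W.length)
    (hsep : ∀ q ∈ Q, ∀ q' ∈ Q, q < q' → q + N * x.length + x.length ≤ q')
    (e : Fin (n + 2) ↪o ℕ) (he : ∀ i, e i ∈ Q) (k : Fin (n + 2) → ℕ) (hk : ∀ i, k i ≤ N)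
    (hdec : ∀ i : Fin (n + 1), LtAtMismatch
      ((replicate (k i.succ) x).flatten ++ window W (e i.succ + N * x.length) x.length)
      ((replicate (k i.castSucc) x).flatten ++
        window W (e i.castSucc + N * x.length) x.length)) :
    IsNDivisible (n + 2) W := by
  refine .of_windows (fun i => e i + (N - k i) * x.length)
    (fun i => window W (e i + (N - k i) * x.length) (k i * x.length + x.length))
    (fun i => window_prefix _ _ _) (fun i => ?_) (fun i => ?_)
  · have := hsep _ (he _) _ (he _) (e.strictMono i.castSucc_lt_succ)
    have := length_window_le W (e i.castSucc + (N - k i.castSucc) * x.length)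
      (k i.castSucc * x.length + x.length)
    have : (N - k i.castSucc) * x.length + k i.castSucc * x.length = N * x.length := by
      rw [← Nat.add_mul, Nat.sub_add_cancel (hk _)]
    omega
  · have hwin j := window_of_fragment (hk j) (hocc _ (he j)) (by have := hlen _ (he j); omega)
    simpa only [hwin] using hdec i

/-- The `i`-th of `n` fragments whose tails exceed `x` is entered `i + 1` periods before its
tail; with tails below `x`, `n - i` periods before. -/
theorem card_le_of_fragments (hn : 2 ≤ n) (hnN : n ≤ N) (hW : ¬ IsNDivisible n W)
    (hocc : ∀ q ∈ Q, (W.drop q).take (N * x.length) = (replicate N x).flatten)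
    (hlen : ∀ q ∈ Q, q + N * x.length + x.length ≤ W.length)
    (hsep : ∀ q ∈ Q, ∀ q' ∈ Q, q < q' → q + N * x.length + x.length ≤ q')
    (htail : ∀ q ∈ Q, window W (q + N * x.length) x.length ≠ x) :
    Q.card ≤ 2 * n - 2 := by
  obtain ⟨n, rfl⟩ : ∃ k, n = k + 2 := ⟨n - 2, by omega⟩
  set tail := fun q => window W (q + N * x.length) x.length
  have htlen : ∀ q ∈ Q, (tail q).length = x.length := fun q hq => length_window (hlen q hq)
  have hpush (j : ℕ) (t : List α) :
      (replicate (j + 1) x).flatten ++ t = (replicate j x).flatten ++ (x ++ t) := by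
    simp [replicate_succ']
  have hhi : (Q.filter fun q => x < tail q).card ≤ n + 1 := by
    by_contra! h
    have he := fun i => mem_filter.mp (orderEmbOfCardLe_mem _ h i)
    refine hW (.of_fragments hocc hlen hsep _ (fun i => (he i).1) (fun i => i + 1)
      (fun i => by omega) fun i => ?_)
    rw [Fin.val_succ, hpush, Fin.val_castSucc]
    exact ((LtAtMismatch.of_lt_of_length_eq (he _).2 (htlen _ (he _).1).symm).of_prefix
      (prefix_append _ _) (prefix_refl _)).append_left _
  have hlo : (Q.filter fun q => tail q ≤ x).card ≤ n + 1 := by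
    by_contra! h
    have he := fun i => mem_filter.mp (orderEmbOfCardLe_mem _ h i)
    refine hW (.of_fragments hocc hlen hsep _ (fun i => (he i).1) (fun i => n + 2 - i)
      (fun i => by omega) fun i => ?_)
    rw [Fin.val_succ, Fin.val_castSucc, show n + 2 - (i : ℕ) = n + 2 - (i + 1) + 1 by omega,
      hpush]
    have hlt := (he i.succ).2.lt_of_ne (htail _ (he _).1)
    exact ((LtAtMismatch.of_lt_of_length_eq hlt (htlen _ (he _).1)).of_prefix
      (prefix_refl _) (prefix_append _ _)).append_left _
  have := card_filter_add_card_filter_not (s := Q) fun q => x < tail q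
  simp only [not_lt] at this
  omega

end Fragments

section Periods

open Finset

variable {α ι : Type*} [LinearOrder α] [LinearOrder ι] [Fintype ι] {W : List α} {n : ℕ}
  {x : ι → List α} {q : ι → ℕ}

theorem card_filter_period_eq_le (hn : 2 ≤ n) (hW : ¬ IsNDivisible n W)
    (hxlen : ∀ j, (x j).length < n)
    (hocc : ∀ j, (W.drop (q j)).take (2 * n * (x j).length) =
      (List.replicate (2 * n) (x j)).flatten)
    (hcomp : ∀ j, (W.drop (q j + 2 * n * (x j).length)).take (x j).length ≠ x j)
    (hbound : ∀ j, q j + 2 * n * (x j).length + (x j).length ≤ W.length)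
    (hsep : ∀ j k, j < k → q j + 2 * n * (x j).length + n ≤ q k) (v : List α) :
    (univ.filter (x · = v)).card ≤ 2 * n - 2 := by
  have hq : StrictMono q := fun j k hjk => by have := hsep j k hjk; omega
  rw [← card_image_of_injective _ hq.injective]
  refine card_le_of_fragments (N := 2 * n) (x := v) hn (by omega) hW ?_ ?_ ?_ ?_ <;>
    simp only [forall_mem_image, mem_filter, mem_univ, true_and]
  · rintro j rfl; exact hocc j
  · rintro j rfl; exact hbound j
  · rintro j rfl k hk hjk
    have := hsep j k (hq.lt_iff_lt.mp hjk); have := hxlen j; omega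
  · rintro j rfl; exact hcomp j

theorem card_image_period_le [Fintype α] [Nonempty α] (hn : 2 ≤ n) (hW : ¬ IsNDivisible n W)
    (hxlen : ∀ j, (x j).length < n)
    (hocc : ∀ j, (W.drop (q j)).take (2 * n * (x j).length) =
      (List.replicate (2 * n) (x j)).flatten)
    (hbound : ∀ j, q j + 2 * n * (x j).length + (x j).length ≤ W.length)
    (hsep : ∀ j k, j < k → q j + 2 * n * (x j).length + n ≤ q k) :
    (univ.image x).card ≤
      3 ^ Nat.clog 3 n * (n - 1) ^ (3 * Nat.clog 3 n) * Fintype.card α * n := by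
  have hq : StrictMono q := fun j k hjk => by have := hsep j k hjk; omega
  refine (card_le_mul_card_image_of_maps_to (f := List.length) (t := range n)
    (by simpa using hxlen) (3 ^ Nat.clog 3 n * (n - 1) ^ (3 * Nat.clog 3 n) * Fintype.card α)
    fun m hm => ?_).trans_eq (by simp)
  calc ((univ.image x).filter (·.length = m)).card
      ≤ (((univ.filter fun j => (x j).length = m).image q).image (window W · m)).card :=
        card_le_card fun v hv => by
          obtain ⟨⟨j, -, rfl⟩, rfl⟩ := by simpa using hv
          simpa using ⟨j, rfl, window_eq_of_fragment (by omega) (hocc j)⟩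
    _ ≤ _ := by
        refine card_image_window_le hn hW _ m
          ((Nat.le_pow_clog (by norm_num) n).trans' (mem_range.mp hm).le) _ ?_ ?_ <;>
          simp only [forall_mem_image, mem_filter, mem_univ, true_and]
        · rintro j rfl; have := hbound j; omega
        · rintro j rfl k - hjk
          have := hsep j k (hq.lt_iff_lt.mp hjk); have := hxlen j; omega

end Periods

theorem three_pow_clog_le_sq {n : ℕ} (hn : 2 ≤ n) : 3 ^ Nat.clog 3 n ≤ n ^ 2 := by
  obtain ⟨K, hK⟩ : ∃ K, Nat.clog 3 n = K + 1 :=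
    ⟨_, (Nat.succ_pred_eq_of_pos (Nat.clog_pos (by norm_num) (by omega))).symm⟩
  have := Nat.pow_pred_clog_lt_self (b := 3) (by norm_num) (by omega : 1 < n)
  rw [hK, Nat.pred_succ] at this
  rw [hK, pow_succ]
  nlinarith

theorem two_mul_sub_two_mul_lt {n K l : ℕ} (hn : 2 ≤ n) (hl : 1 ≤ l) (hK : 3 ^ K ≤ n ^ 2) :
    (2 * n - 2) * (3 ^ K * (n - 1) ^ (3 * K) * l * n) < 2 * n ^ (3 * K + 4) * l := by
  have hpow : (n - 1) ^ (3 * K + 1) < n ^ (3 * K + 1) := Nat.pow_lt_pow_left (by omega) (by omega)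
  calc (2 * n - 2) * (3 ^ K * (n - 1) ^ (3 * K) * l * n)
      = 2 * ((n - 1) ^ (3 * K + 1) * 3 ^ K * n) * l := by
        rw [show 2 * n - 2 = 2 * (n - 1) by omega]
        ring
    _ ≤ 2 * ((n - 1) ^ (3 * K + 1) * n ^ 2 * n) * l := by gcongr
    _ < 2 * (n ^ (3 * K + 1) * n ^ 2 * n) * l := by gcongr
    _ = 2 * n ^ (3 * K + 4) * l := by ring

theorem stmt_18_general (l n : ℕ) (hl : 1 ≤ l) (hn : 2 ≤ n) (W : List (Fin l))
    (hW : ¬ IsNDivisible n W) (s : ℕ)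
    (x : Fin s → List (Fin l)) (q : Fin s → ℕ)
    (hxlen : ∀ j, (x j).length < n)
    (hocc : ∀ j, (W.drop (q j)).take (2 * n * (x j).length) =
      (List.replicate (2 * n) (x j)).flatten)
    (hcomp : ∀ j, (W.drop (q j + 2 * n * (x j).length)).take (x j).length ≠ x j)
    (hbound : ∀ j, q j + 2 * n * (x j).length + (x j).length ≤ W.length)
    (hsep : ∀ j k : Fin s, j < k → q j + 2 * n * (x j).length + n ≤ q k) :
    s < 2 * n ^ (3 * ⌈Real.logb 3 (n : ℝ)⌉₊ + 4) * l := by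
  have : Nonempty (Fin l) := ⟨⟨0, hl⟩⟩
  rw [show ⌈Real.logb 3 (n : ℝ)⌉₊ = Nat.clog 3 n by
    exact_mod_cast Real.natCeil_logb_natCast 3 n]
  calc s = (Finset.univ : Finset (Fin s)).card := by simp
    _ ≤ (2 * n - 2) * (Finset.univ.image x).card := Finset.card_le_mul_card_image _ _
        fun v _ => card_filter_period_eq_le hn hW hxlen hocc hcomp hbound hsep v
    _ ≤ (2 * n - 2) * (3 ^ Nat.clog 3 n * (n - 1) ^ (3 * Nat.clog 3 n) * l * n) := by
        simpa using Nat.mul_le_mul_left _ (card_image_period_le hn hW hxlen hocc hbound hsep)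
    _ < 2 * n ^ (3 * Nat.clog 3 n + 4) * l := two_mul_sub_two_mul_lt hn hl (three_pow_clog_le_sq hn)

/-- Theorem (essential height): in any non-`n`-divisible word `W` over an `l`-letter
alphabet, the number `s` of pairwise disjoint periodic fragments `x^(2n)` (with `|x| < n`,
each fragment followed by a word of the period's length differing from the period, and
consecutive fragments separated by at least `n` positions) is less than
`Υ(n,l) = 2·n^(3·⌈log₃ n⌉+4)·l`. -/
theorem stmt_18 (l n : ℕ) (hl : 1 ≤ l) (hn : 2 ≤ n) (W : List (Fin l))
    (hW : ¬ IsNDivisible n W) (s : ℕ)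
    (x : Fin s → List (Fin l)) (q : Fin s → ℕ)
    (hxlen : ∀ j, (x j).length < n) (hxne : ∀ j, x j ≠ [])
    (hocc : ∀ j, (W.drop (q j)).take (2 * n * (x j).length) =
      (List.replicate (2 * n) (x j)).flatten)
    (hcomp : ∀ j, (W.drop (q j + 2 * n * (x j).length)).take (x j).length ≠ x j)
    (hbound : ∀ j, q j + 2 * n * (x j).length + (x j).length ≤ W.length)
    (hsep : ∀ j k : Fin s, j < k → q j + 2 * n * (x j).length + n ≤ q k) :
    s < 2 * n ^ (3 * ⌈Real.logb 3 (n : ℝ)⌉₊ + 4) * l :=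
  stmt_18_general l n hl hn W hW s x q hxlen hocc hcomp hbound hsep
end
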